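/- For a quantum hidden Markov model over a finite alphabet X with memory dimension d, the real linear span of {A_w(σ₀) : w ∈ X*, |w| ≤ d² − 1} equals the full history space, and the real linear span of the functionals {ρ ↦ tr[A_w(ρ)] : w ∈ X*, |w| ≤ d² − 1} equals the full future space. Hence there exist sufficient history and future wordlists containing no word longer than d² − 1. -/

import Mathlib

open Matrix
open scoped ComplexOrder

noncomputable section

/-- A quantum hidden Markov model over alphabet `X` with memory dimension `d`:
a density matrix `σ0` together with Kraus operators `K x y` (with trashed
alphabet `Fin m`) summing to a trace-preserving map. -/
structure QHMM (X : Type) [Fintype X] (d : ℕ) where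
  m : ℕ
  σ0 : Matrix (Fin d) (Fin d) ℂ
  K : X → Fin m → Matrix (Fin d) (Fin d) ℂ
  σ0_posSemidef : σ0.PosSemidef
  σ0_trace : σ0.trace = 1
  kraus_normalized : ∑ x : X, ∑ y : Fin m, (K x y)ᴴ * K x y = 1

namespace QHMM

variable {X : Type} [Fintype X] {d : ℕ}

/-- The completely positive map associated with symbol `x`. -/
def A (M : QHMM X d) (x : X) (ρ : Matrix (Fin d) (Fin d) ℂ) : Matrix (Fin d) (Fin d) ℂ :=
  ∑ y : Fin M.m, M.K x y * ρ * (M.K x y)ᴴ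

/-- The map associated with a word: `A_w = A_{x_{L-1}} ∘ ⋯ ∘ A_{x_0}` (empty word ↦ identity). -/
def Aw (M : QHMM X d) (w : List X) (ρ : Matrix (Fin d) (Fin d) ℂ) : Matrix (Fin d) (Fin d) ℂ :=
  w.foldl (fun σ x => M.A x σ) ρ

/-- The word-probability function of the QHMM: `P(w) = tr[A_w(σ0)]`. -/
def P (M : QHMM X d) (w : List X) : ℝ := (M.Aw w M.σ0).trace.re

/-- Conditional probability `P(w_f | w_h) = tr[A_{w_f}(A_{w_h}(σ0))]/tr[A_{w_h}(σ0)]`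
when `tr[A_{w_h}(σ0)] > 0`, and `0` otherwise. -/
def condP (M : QHMM X d) (wf wh : List X) : ℝ :=
  if 0 < (M.Aw wh M.σ0).trace.re then
    (M.Aw wf (M.Aw wh M.σ0)).trace.re / (M.Aw wh M.σ0).trace.re
  else 0

/-- The history space: real span of all observation-induced memory states. -/
def historySpace (M : QHMM X d) : Submodule ℝ (Matrix (Fin d) (Fin d) ℂ) :=
  Submodule.span ℝ {ρ | ∃ w : List X, ρ = M.Aw w M.σ0}

/-- The linear functional `ρ ↦ tr[A_w(ρ)]` induced by the future word `w`. -/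
def futureFunctional (M : QHMM X d) (w : List X) : Matrix (Fin d) (Fin d) ℂ → ℂ :=
  fun ρ => (M.Aw w ρ).trace

/-- The future space: real span of the future-word functionals. -/
def futureSpace (M : QHMM X d) : Submodule ℝ (Matrix (Fin d) (Fin d) ℂ → ℂ) :=
  Submodule.span ℝ {f | ∃ w : List X, f = M.futureFunctional w}

/-- The inert history: elements of the history space annihilated by every future functional. -/
def inertHistorySet (M : QHMM X d) : Set (Matrix (Fin d) (Fin d) ℂ) :=
  {h | h ∈ M.historySpace ∧ ∀ w : List X, (M.Aw w h).trace = 0}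

/-- The inert future: functionals in the future space annihilating the whole history space. -/
def inertFutureSet (M : QHMM X d) : Set (Matrix (Fin d) (Fin d) ℂ → ℂ) :=
  {f | f ∈ M.futureSpace ∧ ∀ h ∈ M.historySpace, f h = 0}

/-- A history wordlist is sufficient if the induced states, together with the inert
history, span the history space. -/
def SufficientHistory (M : QHMM X d) (Ω : Set (List X)) : Prop :=
  Submodule.span ℝ ({ρ | ∃ w ∈ Ω, ρ = M.Aw w M.σ0} ∪ M.inertHistorySet) = M.historySpace

/-- A future wordlist is sufficient if the induced functionals, together with the inert
future, span the future space. -/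
def SufficientFuture (M : QHMM X d) (Ω : Set (List X)) : Prop :=
  Submodule.span ℝ ({f | ∃ w ∈ Ω, f = M.futureFunctional w} ∪ M.inertFutureSet) = M.futureSpace

end QHMM

/-- A generalized hidden Markov model over alphabet `X` with latent dimension `n`. -/
structure GHMM (X : Type) [Fintype X] (n : ℕ) where
  η0 : Fin n → ℝ
  T : X → Matrix (Fin n) (Fin n) ℝ
  τ : Fin n → ℝ
  fixed : (∑ x : X, T x) *ᵥ τ = τ
  normalized : η0 ⬝ᵥ τ = 1

namespace GHMM

variable {X : Type} [Fintype X] {n : ℕ}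

/-- The word-probability function of the GHMM: `P(w) = η₀ T^(x₀)⋯T^(x_{L-1}) τ`. -/
def P (G : GHMM X n) (w : List X) : ℝ := G.η0 ⬝ᵥ ((w.map G.T).prod *ᵥ G.τ)

end GHMM

/-- The Hankel rank of a word function `P`: the real dimension of the span of its
left-translates `v ↦ P (u ++ v)`. -/
def hankelRank {X : Type} (P : List X → ℝ) : Cardinal :=
  Module.rank ℝ ↥(Submodule.span ℝ {f : List X → ℝ | ∃ u : List X, f = fun v => P (u ++ v)})




section AuxForProof

section Aux
variable {d : ℕ}

/-- Hermitian matrices as a real submodule. -/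
def hermS (d : ℕ) : Submodule ℝ (Matrix (Fin d) (Fin d) ℂ) where
  carrier := {ρ | ρᴴ = ρ}
  add_mem' := by
    intro a b ha hb
    simp only [Set.mem_setOf_eq] at *
    rw [conjTranspose_add, ha, hb]
  zero_mem' := by simp
  smul_mem' := by
    intro r a ha
    simp only [Set.mem_setOf_eq] at *
    rw [conjTranspose_smul, ha, star_trivial]

def hermToReal (d : ℕ) : hermS d →ₗ[ℝ] Matrix (Fin d) (Fin d) ℝ where
  toFun ρ := Matrix.of fun i j => if i ≤ j then (ρ.1 i j).re else (ρ.1 j i).im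
  map_add' a b := by
    ext i j
    by_cases h : i ≤ j <;> simp [h]
  map_smul' r a := by
    ext i j
    by_cases h : i ≤ j <;> simp [h, Complex.real_smul]

lemma hermToReal_inj : Function.Injective (hermToReal d) := by
  intro a b hab
  have h0 : hermToReal d (a - b) = 0 := by rw [map_sub, hab, sub_self]
  have hab' : a - b = 0 := by
    set c := a - b with hc
    have hherm : (c.1)ᴴ = c.1 := c.2
    have key : ∀ i j : Fin d, i ≤ j → c.1 i j = 0 := by
      intro i j hij
      have hre : (c.1 i j).re = 0 := by
        have := congrFun (congrFun (congrArg (fun M => (M : Matrix (Fin d) (Fin d) ℝ)) h0) i) j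
        simpa [hermToReal, hij] using this
      rcases lt_or_eq_of_le hij with hlt | heq
      · have him : (c.1 i j).im = 0 := by
          have := congrFun (congrFun (congrArg (fun M => (M : Matrix (Fin d) (Fin d) ℝ)) h0) j) i
          simpa [hermToReal, not_le.mpr hlt] using this
        exact Complex.ext hre him
      · subst heq
        have hdiag : star (c.1 i i) = c.1 i i := by
          have := congrFun (congrFun hherm i) i
          simpa [conjTranspose_apply] using this
        have him : (c.1 i i).im = 0 := by
          have := Complex.conj_eq_iff_im.mp hdiag
          exact this
        exact Complex.ext hre him
    apply Subtype.ext
    ext i j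
    rcases le_total i j with h | h
    · simpa using key i j h
    · have : c.1 i j = star (c.1 j i) := by
        have := congrFun (congrFun hherm i) j
        rw [conjTranspose_apply] at this
        exact this.symm
      simp [this, key j i h]
  exact sub_eq_zero.mp (by exact_mod_cast congrArg Subtype.val hab')

instance : FiniteDimensional ℝ (hermS d) := by
  exact FiniteDimensional.of_injective (hermToReal d) hermToReal_inj

lemma finrank_hermS_le : Module.finrank ℝ (hermS d) ≤ d ^ 2 := by
  have h := LinearMap.finrank_le_finrank_of_injective (hermToReal_inj (d := d))
  have : Module.finrank ℝ (Matrix (Fin d) (Fin d) ℝ) = d ^ 2 := by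
    rw [Module.finrank_matrix]
    simp [sq]
  omega

/-- Hermitian-compatible complex-linear functionals, as a real submodule of all functions. -/
def dualHerm (d : ℕ) : Submodule ℝ (Matrix (Fin d) (Fin d) ℂ → ℂ) where
  carrier := {f | (∀ a b, f (a + b) = f a + f b) ∧ (∀ (c : ℂ) a, f (c • a) = c * f a)
      ∧ (∀ a, f aᴴ = star (f a))}
  add_mem' := by
    rintro f g ⟨hf1, hf2, hf3⟩ ⟨hg1, hg2, hg3⟩
    refine ⟨fun a b => ?_, fun c a => ?_, fun a => ?_⟩ <;>
      simp [hf1, hf2, hf3, hg1, hg2, hg3, mul_add] <;> ring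
  zero_mem' := by
    refine ⟨fun a b => ?_, fun c a => ?_, fun a => ?_⟩ <;> simp
  smul_mem' := by
    rintro r f ⟨hf1, hf2, hf3⟩
    refine ⟨fun a b => ?_, fun c a => ?_, fun a => ?_⟩ <;>
      simp [hf1, hf2, hf3, Complex.real_smul, mul_add] <;> ring

def dualToHerm (d : ℕ) : dualHerm d →ₗ[ℝ] hermS d where
  toFun f := ⟨Matrix.of fun i j => f.1 (Matrix.single i j 1), by
    ext i j
    simp only [conjTranspose_apply, Matrix.of_apply]
    have h2 : (Matrix.single j i (1:ℂ))ᴴ = Matrix.single i j 1 := by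
      ext a b
      simp [Matrix.single, conjTranspose_apply, and_comm]
    rw [← f.2.2.2, h2]⟩
  map_add' f g := by apply Subtype.ext; ext i j; simp
  map_smul' r f := by apply Subtype.ext; ext i j; simp [Complex.real_smul]

lemma dualToHerm_inj : Function.Injective (dualToHerm d) := by
  intro f g hfg
  have h0 : dualToHerm d (f - g) = 0 := by rw [map_sub, hfg, sub_self]
  set c := f - g with hc
  have hvals : ∀ i j : Fin d, c.1 (Matrix.single i j 1) = 0 := by
    intro i j
    have := congrArg Subtype.val h0
    have := congrFun (congrFun this i) j
    simpa [dualToHerm] using this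
  have hzero : c.1 = 0 := by
    let lin : Matrix (Fin d) (Fin d) ℂ →ₗ[ℂ] ℂ :=
      { toFun := c.1, map_add' := c.2.1, map_smul' := fun r a => c.2.2.1 r a }
    have : ∀ ρ, lin ρ = 0 := by
      intro ρ
      conv_lhs => rw [matrix_eq_sum_single ρ]
      rw [map_sum]
      refine Finset.sum_eq_zero fun i _ => ?_
      rw [map_sum]
      refine Finset.sum_eq_zero fun j _ => ?_
      have : Matrix.single i j (ρ i j) = (ρ i j) • Matrix.single i j 1 := by
        rw [smul_single]; simp
      rw [this, _root_.map_smul]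
      simp [lin, hvals i j]
    funext ρ; exact this ρ
  have : c = 0 := Subtype.ext hzero
  exact sub_eq_zero.mp (by exact_mod_cast congrArg Subtype.val this)

instance : FiniteDimensional ℝ (dualHerm d) :=
  FiniteDimensional.of_injective (dualToHerm d) dualToHerm_inj

lemma finrank_dualHerm_le : Module.finrank ℝ (dualHerm d) ≤ d ^ 2 :=
  le_trans (LinearMap.finrank_le_finrank_of_injective (dualToHerm_inj (d := d))) finrank_hermS_le

end Aux


lemma chain_stabilize {V : Type*} [AddCommGroup V] [Module ℝ V]
    (W : ℕ → Submodule ℝ V) (D : ℕ) (hD : 1 ≤ D)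
    (hmono : ∀ n, W n ≤ W (n + 1))
    (hstep : ∀ n, W (n + 1) ≤ W n → W (n + 2) ≤ W (n + 1))
    (hfin : ∀ n, FiniteDimensional ℝ (W n))
    (hrank : ∀ n, Module.finrank ℝ (W n) ≤ D)
    (hbase : 1 ≤ Module.finrank ℝ (W 0)) :
    ∀ n, W n ≤ W (D - 1) := by
  have hmon : Monotone W := monotone_nat_of_le_succ hmono
  have grow : ∀ n, (∀ k < n, ¬ W (k + 1) ≤ W k) → n + 1 ≤ Module.finrank ℝ (W n) := by
    intro n
    induction n with
    | zero => intro _; exact hbase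
    | succ n ih =>
      intro h
      have h1 := ih (fun k hk => h k (Nat.lt_succ_of_lt hk))
      have hlt : W n < W (n + 1) :=
        lt_of_le_of_ne (hmono n) (fun he => (h n (Nat.lt_succ_self n)) (le_of_eq he.symm))
      haveI := hfin (n + 1)
      have := Submodule.finrank_lt_finrank_of_lt hlt
      omega
  have stab : ∃ k, k < D ∧ W (k + 1) ≤ W k := by
    by_contra hcon
    push_neg at hcon
    have := grow D (fun k hk => hcon k hk)
    have := hrank D
    omega
  obtain ⟨k, hkD, hk⟩ := stab
  have step_all : ∀ j, W (k + j + 1) ≤ W (k + j) := by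
    intro j
    induction j with
    | zero => exact hk
    | succ j ih => exact hstep (k + j) ih
  have down : ∀ j, W (k + j) ≤ W k := by
    intro j
    induction j with
    | zero => exact le_rfl
    | succ j ih => exact le_trans (step_all j) ih
  intro n
  have hWk : W n ≤ W k := by
    rcases le_or_gt n k with h | h
    · exact le_trans (hmon h) le_rfl
    · have : n = k + (n - k) := by omega
      rw [this]
      exact down (n - k)
  exact le_trans hWk (hmon (by omega))


namespace QHMM
variable {X : Type} [Fintype X] {d : ℕ}

lemma Aw_nil (M : QHMM X d) (ρ) : M.Aw [] ρ = ρ := rfl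
lemma Aw_cons (M : QHMM X d) (x : X) (w : List X) (ρ) :
    M.Aw (x :: w) ρ = M.Aw w (M.A x ρ) := rfl
lemma Aw_concat (M : QHMM X d) (w : List X) (x : X) (ρ) :
    M.Aw (w ++ [x]) ρ = M.A x (M.Aw w ρ) := by
  simp [QHMM.Aw, List.foldl_append]

lemma A_add (M : QHMM X d) (x : X) (a b) : M.A x (a + b) = M.A x a + M.A x b := by
  simp [QHMM.A, Matrix.mul_add, Matrix.add_mul, Finset.sum_add_distrib]
lemma A_smul (M : QHMM X d) (x : X) (c : ℂ) (a) : M.A x (c • a) = c • M.A x a := by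
  simp [QHMM.A, Matrix.mul_smul, Matrix.smul_mul, Finset.smul_sum]
lemma A_conjT (M : QHMM X d) (x : X) (a) : M.A x aᴴ = (M.A x a)ᴴ := by
  simp [QHMM.A, conjTranspose_sum, conjTranspose_mul, Matrix.mul_assoc]

lemma Aw_add (M : QHMM X d) (w : List X) (a b) :
    M.Aw w (a + b) = M.Aw w a + M.Aw w b := by
  induction w generalizing a b with
  | nil => rfl
  | cons x w ih => rw [Aw_cons, Aw_cons, Aw_cons, A_add, ih]
lemma Aw_smul (M : QHMM X d) (w : List X) (c : ℂ) (a) :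
    M.Aw w (c • a) = c • M.Aw w a := by
  induction w generalizing a with
  | nil => rfl
  | cons x w ih => rw [Aw_cons, Aw_cons, A_smul, ih]
lemma Aw_conjT (M : QHMM X d) (w : List X) (a) : M.Aw w aᴴ = (M.Aw w a)ᴴ := by
  induction w generalizing a with
  | nil => rfl
  | cons x w ih => rw [Aw_cons, Aw_cons, A_conjT, ih]

/-- `A x` as a real-linear map. -/
def Arl (M : QHMM X d) (x : X) :
    Matrix (Fin d) (Fin d) ℂ →ₗ[ℝ] Matrix (Fin d) (Fin d) ℂ where
  toFun := M.A x
  map_add' := A_add M x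
  map_smul' r a := by
    have h : (r : ℝ) • a = ((r : ℂ)) • a := by
      rw [← algebraMap_smul ℂ r a]; norm_num
    simp only [RingHom.id_apply, h, A_smul]
    rw [← algebraMap_smul ℂ (r : ℝ) (M.A x a)]; norm_num


/-- Precomposition with `A x` as a real-linear map on functionals. -/
def auxPrecomp (M : QHMM X d) (x : X) :
    (Matrix (Fin d) (Fin d) ℂ → ℂ) →ₗ[ℝ] (Matrix (Fin d) (Fin d) ℂ → ℂ) where
  toFun f := fun ρ => f (M.A x ρ)
  map_add' f g := rfl
  map_smul' r f := rfl

end QHMM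

end AuxForProof

/-- Words of length at most `d² − 1` already span the history and future spaces of a
QHMM of memory dimension `d`; hence there are sufficient history and future wordlists
containing no word longer than `d² − 1`. -/
theorem qhmm_wordlist_length {X : Type} [Fintype X] {d : ℕ} (M : QHMM X d) :
    Submodule.span ℝ {ρ | ∃ w : List X, w.length ≤ d ^ 2 - 1 ∧ ρ = M.Aw w M.σ0}
      = M.historySpace ∧
    Submodule.span ℝ {f | ∃ w : List X, w.length ≤ d ^ 2 - 1 ∧ f = M.futureFunctional w}
      = M.futureSpace ∧
    (∃ Ωh : Set (List X), M.SufficientHistory Ωh ∧ ∀ w ∈ Ωh, w.length ≤ d ^ 2 - 1) ∧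
    (∃ Ωf : Set (List X), M.SufficientFuture Ωf ∧ ∀ w ∈ Ωf, w.length ≤ d ^ 2 - 1) := by
  classical
  -- d is positive
  have hd : 0 < d := by
    rcases Nat.eq_zero_or_pos d with h | h
    · subst h
      have := M.σ0_trace
      simp [Matrix.trace] at this
    · exact h
  have hD : 1 ≤ d ^ 2 := Nat.one_le_pow _ _ hd
  have hσ0ne : M.σ0 ≠ 0 := by
    intro h
    have := M.σ0_trace
    rw [h] at this
    simp [Matrix.trace] at this
  -- ======== History chain ========
  set Wh : ℕ → Submodule ℝ (Matrix (Fin d) (Fin d) ℂ) :=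
    fun n => Submodule.span ℝ {ρ | ∃ w : List X, w.length ≤ n ∧ ρ = M.Aw w M.σ0} with hWhdef
  have hermMem : ∀ w : List X, M.Aw w M.σ0 ∈ hermS d := by
    intro w
    show (M.Aw w M.σ0)ᴴ = M.Aw w M.σ0
    have hh : M.σ0ᴴ = M.σ0 := M.σ0_posSemidef.1
    rw [← QHMM.Aw_conjT, hh]
  have WhleH : ∀ n, Wh n ≤ hermS d := by
    intro n
    apply Submodule.span_le.mpr
    rintro ρ ⟨w, _, rfl⟩
    exact hermMem w
  haveI hfinH : ∀ n, FiniteDimensional ℝ (Wh n) := by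
    intro n; infer_instance
  have hrankH : ∀ n, Module.finrank ℝ (Wh n) ≤ d ^ 2 := fun n =>
    le_trans (Submodule.finrank_mono (WhleH n)) finrank_hermS_le
  have hmonoH : ∀ n, Wh n ≤ Wh (n + 1) := by
    intro n
    apply Submodule.span_mono
    rintro ρ ⟨w, hw, rfl⟩
    exact ⟨w, le_trans hw (Nat.le_succ n), rfl⟩
  have mapsH : ∀ (x : X) (n : ℕ), Submodule.map (M.Arl x) (Wh n) ≤ Wh (n + 1) := by
    intro x n
    rw [hWhdef, Submodule.map_span]
    apply Submodule.span_le.mpr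
    rintro _ ⟨ρ, ⟨w, hw, rfl⟩, rfl⟩
    refine Submodule.subset_span ⟨w ++ [x], by simp [hw], ?_⟩
    show M.Arl x (M.Aw w M.σ0) = _
    rw [QHMM.Aw_concat]
    rfl
  have hstepH : ∀ n, Wh (n + 1) ≤ Wh n → Wh (n + 2) ≤ Wh (n + 1) := by
    intro n hle
    apply Submodule.span_le.mpr
    rintro ρ ⟨w, hw, rfl⟩
    by_cases hw' : w.length ≤ n + 1
    · exact Submodule.subset_span ⟨w, hw', rfl⟩
    · have hlen : w.length = n + 2 := by omega
      rcases List.eq_nil_or_concat w with h | ⟨w', x, rfl⟩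
      · subst h; simp at hlen
      · rw [List.concat_eq_append] at hlen ⊢
        simp at hlen
        have hmem : M.Aw w' M.σ0 ∈ Wh n :=
          hle (Submodule.subset_span ⟨w', by omega, rfl⟩)
        have : M.Arl x (M.Aw w' M.σ0) ∈ Wh (n + 1) :=
          mapsH x n ⟨_, hmem, rfl⟩
        rw [QHMM.Aw_concat]
        exact this
  have hbaseH : 1 ≤ Module.finrank ℝ (Wh 0) := by
    by_contra h
    push_neg at h
    have h0 : Module.finrank ℝ (Wh 0) = 0 := by omega
    have : Wh 0 = ⊥ := Submodule.finrank_eq_zero.mp h0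
    have hσ : M.σ0 ∈ Wh 0 := Submodule.subset_span ⟨[], by simp, rfl⟩
    rw [this] at hσ
    exact hσ0ne (Submodule.mem_bot ℝ |>.mp hσ)
  have chainH := chain_stabilize Wh (d ^ 2) hD hmonoH hstepH hfinH hrankH hbaseH
  have mainH : Wh (d ^ 2 - 1) = M.historySpace := by
    apply le_antisymm
    · apply Submodule.span_le.mpr
      rintro ρ ⟨w, _, rfl⟩
      exact Submodule.subset_span ⟨w, rfl⟩
    · apply Submodule.span_le.mpr
      rintro ρ ⟨w, rfl⟩
      exact chainH w.length (Submodule.subset_span ⟨w, le_rfl, rfl⟩)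
  -- ======== Future chain ========
  set Fs : ℕ → Submodule ℝ (Matrix (Fin d) (Fin d) ℂ → ℂ) :=
    fun n => Submodule.span ℝ {f | ∃ w : List X, w.length ≤ n ∧ f = M.futureFunctional w}
    with hFsdef
  have dualMem : ∀ w : List X, M.futureFunctional w ∈ dualHerm d := by
    intro w
    refine ⟨fun a b => ?_, fun c a => ?_, fun a => ?_⟩
    · show (M.Aw w (a + b)).trace = _
      rw [QHMM.Aw_add, Matrix.trace_add]; rfl
    · show (M.Aw w (c • a)).trace = _
      rw [QHMM.Aw_smul, Matrix.trace_smul, smul_eq_mul]; rfl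
    · show (M.Aw w aᴴ).trace = _
      rw [QHMM.Aw_conjT, Matrix.trace_conjTranspose]; rfl
  have FsleD : ∀ n, Fs n ≤ dualHerm d := by
    intro n
    apply Submodule.span_le.mpr
    rintro f ⟨w, _, rfl⟩
    exact dualMem w
  haveI hfinF : ∀ n, FiniteDimensional ℝ (Fs n) := fun n =>
    Submodule.finiteDimensional_of_le (FsleD n)
  have hrankF : ∀ n, Module.finrank ℝ (Fs n) ≤ d ^ 2 := by
    intro n
    calc Module.finrank ℝ (Fs n) ≤ Module.finrank ℝ (dualHerm d) :=
          Submodule.finrank_mono (FsleD n)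
    _ ≤ d ^ 2 := finrank_dualHerm_le
  have hmonoF : ∀ n, Fs n ≤ Fs (n + 1) := by
    intro n
    apply Submodule.span_mono
    rintro f ⟨w, hw, rfl⟩
    exact ⟨w, le_trans hw (Nat.le_succ n), rfl⟩
  have mapsF : ∀ (x : X) (n : ℕ), Submodule.map (M.auxPrecomp x) (Fs n) ≤ Fs (n + 1) := by
    intro x n
    rw [hFsdef, Submodule.map_span]
    apply Submodule.span_le.mpr
    rintro _ ⟨f, ⟨w, hw, rfl⟩, rfl⟩
    exact Submodule.subset_span ⟨x :: w, by simp [hw], rfl⟩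
  have hstepF : ∀ n, Fs (n + 1) ≤ Fs n → Fs (n + 2) ≤ Fs (n + 1) := by
    intro n hle
    apply Submodule.span_le.mpr
    rintro f ⟨w, hw, rfl⟩
    by_cases hw' : w.length ≤ n + 1
    · exact Submodule.subset_span ⟨w, hw', rfl⟩
    · have hlen : w.length = n + 2 := by omega
      rcases w with _ | ⟨x, w'⟩
      · simp at hlen
      · simp at hlen
        have hmem : M.futureFunctional w' ∈ Fs n :=
          hle (Submodule.subset_span ⟨w', by omega, rfl⟩)
        have : M.auxPrecomp x (M.futureFunctional w') ∈ Fs (n + 1) :=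
          mapsF x n ⟨_, hmem, rfl⟩
        exact this
  have hbaseF : 1 ≤ Module.finrank ℝ (Fs 0) := by
    by_contra h
    push_neg at h
    have h0 : Module.finrank ℝ (Fs 0) = 0 := by omega
    have hbot : Fs 0 = ⊥ := Submodule.finrank_eq_zero.mp h0
    have hf : M.futureFunctional [] ∈ Fs 0 := Submodule.subset_span ⟨[], by simp, rfl⟩
    rw [hbot] at hf
    have hf0 : M.futureFunctional [] = 0 := (Submodule.mem_bot ℝ).mp hf
    have := congrFun hf0 M.σ0
    rw [show M.futureFunctional [] M.σ0 = M.σ0.trace from rfl, M.σ0_trace] at this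
    simp at this
  have chainF := chain_stabilize Fs (d ^ 2) hD hmonoF hstepF hfinF hrankF hbaseF
  have mainF : Fs (d ^ 2 - 1) = M.futureSpace := by
    apply le_antisymm
    · apply Submodule.span_le.mpr
      rintro f ⟨w, _, rfl⟩
      exact Submodule.subset_span ⟨w, rfl⟩
    · apply Submodule.span_le.mpr
      rintro f ⟨w, rfl⟩
      exact chainF w.length (Submodule.subset_span ⟨w, le_rfl, rfl⟩)
  -- ======== Assembly ========
  refine ⟨mainH, mainF, ?_, ?_⟩
  · refine ⟨{w : List X | w.length ≤ d ^ 2 - 1}, ?_, fun w hw => hw⟩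
    unfold QHMM.SufficientHistory
    have hset : {ρ | ∃ w ∈ {w : List X | w.length ≤ d ^ 2 - 1}, ρ = M.Aw w M.σ0}
        = {ρ | ∃ w : List X, w.length ≤ d ^ 2 - 1 ∧ ρ = M.Aw w M.σ0} := by
      ext ρ; simp [Set.mem_setOf_eq]
    rw [hset, Submodule.span_union,
      show Submodule.span ℝ {ρ | ∃ w : List X, w.length ≤ d ^ 2 - 1 ∧ ρ = M.Aw w M.σ0}
        = M.historySpace from mainH]
    have h2 : Submodule.span ℝ (M.inertHistorySet) ≤ M.historySpace :=
      Submodule.span_le.mpr fun h hh => hh.1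
    exact sup_eq_left.mpr h2
  · refine ⟨{w : List X | w.length ≤ d ^ 2 - 1}, ?_, fun w hw => hw⟩
    unfold QHMM.SufficientFuture
    have hset : {f | ∃ w ∈ {w : List X | w.length ≤ d ^ 2 - 1}, f = M.futureFunctional w}
        = {f | ∃ w : List X, w.length ≤ d ^ 2 - 1 ∧ f = M.futureFunctional w} := by
      ext f; simp [Set.mem_setOf_eq]
    rw [hset, Submodule.span_union,
      show Submodule.span ℝ {f | ∃ w : List X, w.length ≤ d ^ 2 - 1 ∧ f = M.futureFunctional w}
        = M.futureSpace from mainF]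
    have h2 : Submodule.span ℝ (M.inertFutureSet) ≤ M.futureSpace :=
      Submodule.span_le.mpr fun f hf => hf.1
    exact sup_eq_left.mpr h2



end
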